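/- For 2 ≤ k ≤ n−1 and any M ∈ ℝ, there exist a constant c > 0 depending only on n and k, and N_0 > 0, such that for all N ≥ N_0 the vector μ with μ_1 = ⋯ = μ_{n-1} = N and μ_n = [M − C(n−1,k)N^k]/[C(n−1,k−1)N^{k−1}] satisfies σ_{k-1}(μ|i) ≥ c N^{k−1} for all i = 1,…,n−1. -/

import Mathlib

/-!
With `i < n - 1` deleted, `μ` has `n - 2` entries equal to `N` and the entry `μₙ`, so
`σ_{k-1}(μ|i) = C(n-2,k-1) N^{k-1} + μₙ C(n-2,k-2) N^{k-2}`. Substituting `μₙ`, the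
coefficient of `N^{k-1}` becomes `C(n-2,k-1) - C(n-2,k-2) C(n-1,k) / C(n-1,k-1) = C(n-2,k-1) / k`,
which is positive, and what remains is `C(n-2,k-2) M / (C(n-1,k-1) N)`, eventually at most half
the leading term.
-/

open Finset

noncomputable def esym {n : ℕ} (s : Finset (Fin n)) (μ : Fin n → ℝ) (k : ℕ) : ℝ :=
  ∑ t ∈ s.powersetCard k, ∏ j ∈ t, μ j

lemma esym_of_forall_eq {n : ℕ} {s : Finset (Fin n)} {μ : Fin n → ℝ} {x : ℝ}
    (h : ∀ j ∈ s, μ j = x) (m : ℕ) : esym s μ m = ((#s).choose m : ℝ) * x ^ m := by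
  have hprod : ∀ t ∈ s.powersetCard m, ∏ j ∈ t, μ j = x ^ m := by
    intro t ht
    rw [mem_powersetCard] at ht
    rw [prod_congr rfl fun j hj => h j (ht.1 hj), prod_const, ht.2]
  rw [esym, sum_congr rfl hprod, sum_const, card_powersetCard, nsmul_eq_mul]

lemma esym_insert {n : ℕ} {s : Finset (Fin n)} {a : Fin n} (ha : a ∉ s) (μ : Fin n → ℝ)
    (m : ℕ) : esym (insert a s) μ (m + 1) = esym s μ (m + 1) + μ a * esym s μ m := by
  have hnot : ∀ t ∈ s.powersetCard m, a ∉ t :=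
    fun t ht hat => ha ((mem_powersetCard.1 ht).1 hat)
  rw [esym, esym, esym, powersetCard_succ_insert ha, sum_union, sum_image, mul_sum]
  · exact congrArg _ (sum_congr rfl fun t ht => prod_insert (hnot t ht))
  · intro t ht u hu htu
    rw [← erase_insert (hnot t ht), ← erase_insert (hnot u hu)]
    exact congrArg (erase · a) htu
  · rw [disjoint_left]
    intro t ht htu
    obtain ⟨u, -, rfl⟩ := mem_image.1 htu
    exact ha ((mem_powersetCard.1 ht).1 (mem_insert_self a u))

lemma esym_succ_of_forall_ne_eq {n : ℕ} {s : Finset (Fin n)} {a : Fin n} (ha : a ∈ s)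
    {μ : Fin n → ℝ} {x : ℝ} (h : ∀ j ∈ s, j ≠ a → μ j = x) (m : ℕ) :
    esym s μ (m + 1) = ((#s - 1).choose (m + 1) : ℝ) * x ^ (m + 1) +
      μ a * (((#s - 1).choose m : ℝ) * x ^ m) := by
  have hrest : ∀ j ∈ s.erase a, μ j = x :=
    fun j hj => h j (mem_of_mem_erase hj) (ne_of_mem_erase hj)
  conv_lhs => rw [← insert_erase ha]
  rw [esym_insert (notMem_erase a s), esym_of_forall_eq hrest, esym_of_forall_eq hrest,
    card_erase_of_mem ha]

lemma choose_succ_sub_choose_mul_div_choose {p m : ℕ} (hmp : m ≤ p) :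
    (p.choose (m + 1) : ℝ) - p.choose m * (p + 1).choose (m + 2) / (p + 1).choose (m + 1) =
      p.choose (m + 1) / (m + 2) := by
  have hup : ((p + 1).choose (m + 2) * (m + 2) : ℝ) = (p + 1).choose (m + 1) * (p - m) := by
    exact_mod_cast (Nat.choose_succ_right_eq (p + 1) (m + 1)).trans (by congr 1; omega)
  have hdown : (p.choose (m + 1) * (m + 1) : ℝ) = p.choose m * (p - m) := by
    exact_mod_cast Nat.choose_succ_right_eq p m
  have hpos : ((p + 1).choose (m + 1) : ℝ) ≠ 0 := by
    exact_mod_cast (Nat.choose_pos (by omega)).ne'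
  field_simp
  linear_combination (p + 1).choose (m + 1) * hdown - p.choose m * hup

lemma exists_half_mul_pow_le_mul_pow_add_div {A : ℝ} (hA : 0 < A) (E : ℝ) (j : ℕ) :
    ∃ N₀ : ℝ, 0 < N₀ ∧ ∀ N, N₀ ≤ N → A / 2 * N ^ j ≤ A * N ^ j + E / N := by
  refine ⟨max 1 (2 * |E| / A), by positivity, fun N hN => ?_⟩
  have hN1 : 1 ≤ N := le_of_max_le_left hN
  have hNE : 2 * |E| / A ≤ N := le_of_max_le_right hN
  have hE : |E| / N ≤ A / 2 := by
    rw [div_le_iff₀ (by positivity)]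
    rw [div_le_iff₀ hA] at hNE
    linarith
  have hpow : 1 ≤ N ^ j := one_le_pow₀ hN1
  have hdiv : -(|E| / N) ≤ E / N := by
    rw [← neg_div]
    exact div_le_div_of_nonneg_right (neg_abs_le E) (by positivity)
  nlinarith

theorem stmt11_general (n k : ℕ) (hk : 2 ≤ k) (hkn : k ≤ n - 1) (M : ℝ) :
    ∃ c : ℝ, 0 < c ∧ ∃ N₀ : ℝ, 0 < N₀ ∧
      ∀ N : ℝ, N₀ ≤ N →
        ∀ μ : Fin n → ℝ,
          (μ = fun j : Fin n => if (j : ℕ) < n - 1 then N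
            else (M - ((n - 1).choose k : ℝ) * N ^ k) /
              (((n - 1).choose (k - 1) : ℝ) * N ^ (k - 1))) →
          ∀ i : Fin n, (i : ℕ) < n - 1 →
            c * N ^ (k - 1) ≤ esym (Finset.univ.erase i) μ (k - 1) := by
  obtain ⟨m, rfl⟩ : ∃ m, k = m + 2 := ⟨k - 2, by omega⟩
  obtain ⟨p, rfl⟩ : ∃ p, n = p + 2 := ⟨n - 2, by omega⟩
  have hmp : m + 1 ≤ p := by omega
  have hA : (0 : ℝ) < p.choose (m + 1) / (m + 2) := by
    have := Nat.choose_pos hmp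
    positivity
  obtain ⟨N₀, hN₀, hbound⟩ := exists_half_mul_pow_le_mul_pow_add_div hA
    (p.choose m * M / (p + 1).choose (m + 1)) (m + 1)
  refine ⟨_, half_pos hA, N₀, hN₀, fun N hN μ hμ i hi => ?_⟩
  have hlast : Fin.last (p + 1) ∈ univ.erase i :=
    mem_erase.2 ⟨fun h => by rw [← h, Fin.val_last] at hi; omega, mem_univ _⟩
  have hoff : ∀ j ∈ univ.erase i, j ≠ Fin.last (p + 1) → μ j = N := by
    intro j _ hj
    rw [hμ]
    exact if_pos (Fin.val_lt_last hj)
  have hcard : #(univ.erase i) - 1 = p := by simp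
  have hμlast : μ (Fin.last (p + 1)) = (M - (p + 1).choose (m + 2) * N ^ (m + 2)) /
      ((p + 1).choose (m + 1) * N ^ (m + 1)) := by simp [hμ]
  have hN0 : N ≠ 0 := (hN₀.trans_le hN).ne'
  have hD : ((p + 1).choose (m + 1) : ℝ) ≠ 0 := by
    exact_mod_cast (Nat.choose_pos (by omega)).ne'
  calc p.choose (m + 1) / (m + 2) / 2 * N ^ (m + 1)
      ≤ p.choose (m + 1) / (m + 2) * N ^ (m + 1) + p.choose m * M / (p + 1).choose (m + 1) / N :=
        hbound N hN
    _ = esym (univ.erase i) μ (m + 1) := by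
        rw [esym_succ_of_forall_ne_eq hlast hoff, hcard, hμlast,
          ← choose_succ_sub_choose_mul_div_choose (by omega : m ≤ p)]
        field_simp
        ring

theorem stmt11 (n k : ℕ) (hn : 3 ≤ n) (hk : 2 ≤ k) (hkn : k ≤ n - 1) (M : ℝ) :
    ∃ c : ℝ, 0 < c ∧ ∃ N₀ : ℝ, 0 < N₀ ∧
      ∀ N : ℝ, N₀ ≤ N →
        ∀ μ : Fin n → ℝ,
          (μ = fun j : Fin n => if (j : ℕ) < n - 1 then N
            else (M - ((n - 1).choose k : ℝ) * N ^ k) /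
              (((n - 1).choose (k - 1) : ℝ) * N ^ (k - 1))) →
          ∀ i : Fin n, (i : ℕ) < n - 1 →
            c * N ^ (k - 1) ≤ esym (Finset.univ.erase i) μ (k - 1) :=
  stmt11_general n k hk hkn M
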